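/- For symmetric positive definite k×k matrices Σ_a, Σ_b and t ∈ [0,1], with Σ̃_t the geodesic path and Σ*_t = ((1-t)Σ_a^{-1} + tΣ_b^{-1})^{-1} the harmonic path, it holds that λ_k(Σ̃_t) ≥ λ_k(Σ*_t) ≥ min(λ_k(Σ_a), λ_k(Σ_b)), where λ_k denotes the smallest eigenvalue. -/

import Mathlib

open MeasureTheory Matrix

/-- Largest "eigenvalue" via the Rayleigh quotient (equals the largest eigenvalue
for symmetric matrices). -/
noncomputable def lamMax {k : ℕ} (A : Matrix (Fin k) (Fin k) ℝ) : ℝ :=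
  ⨆ u : {u : Fin k → ℝ // u ⬝ᵥ u = 1}, u.1 ⬝ᵥ A *ᵥ u.1

/-- Smallest "eigenvalue" via the Rayleigh quotient. -/
noncomputable def lamMin {k : ℕ} (A : Matrix (Fin k) (Fin k) ℝ) : ℝ :=
  ⨅ u : {u : Fin k → ℝ // u ⬝ᵥ u = 1}, u.1 ⬝ᵥ A *ᵥ u.1

/-- The scatter halfspace depth of a scatter matrix `Sg` w.r.t. the probability
measure `P`, with location `T`. -/
noncomputable def HD {k : ℕ} (P : Measure (Fin k → ℝ)) (T : Fin k → ℝ)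
    (Sg : Matrix (Fin k) (Fin k) ℝ) : ℝ :=
  ⨅ u : {u : Fin k → ℝ // u ⬝ᵥ u = 1},
    min (P {x | |u.1 ⬝ᵥ (x - T)| ≤ Real.sqrt (u.1 ⬝ᵥ Sg *ᵥ u.1)}).toReal
        (P {x | Real.sqrt (u.1 ⬝ᵥ Sg *ᵥ u.1) ≤ |u.1 ⬝ᵥ (x - T)|}).toReal

/-- Matrix square root via the continuous functional calculus. -/
noncomputable def msqrt {k : ℕ} (A : Matrix (Fin k) (Fin k) ℝ) : Matrix (Fin k) (Fin k) ℝ :=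
  cfc Real.sqrt A

/-- Matrix logarithm via the continuous functional calculus. -/
noncomputable def mlog {k : ℕ} (A : Matrix (Fin k) (Fin k) ℝ) : Matrix (Fin k) (Fin k) ℝ :=
  cfc Real.log A

/-- Matrix real power via the continuous functional calculus. -/
noncomputable def mpow {k : ℕ} (A : Matrix (Fin k) (Fin k) ℝ) (t : ℝ) :
    Matrix (Fin k) (Fin k) ℝ :=
  cfc (fun x : ℝ => x ^ t) A

/-- The geodesic path from `A` to `B` in the space of positive definite matrices. -/
noncomputable def geoPath {k : ℕ} (A B : Matrix (Fin k) (Fin k) ℝ) (t : ℝ) :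
    Matrix (Fin k) (Fin k) ℝ :=
  msqrt A * mpow ((msqrt A)⁻¹ * B * (msqrt A)⁻¹) t * msqrt A

/-- The harmonic path from `A` to `B`. -/
noncomputable def harmPath {k : ℕ} (A B : Matrix (Fin k) (Fin k) ℝ) (t : ℝ) :
    Matrix (Fin k) (Fin k) ℝ :=
  ((1 - t) • A⁻¹ + t • B⁻¹)⁻¹

/-- Frobenius norm of a matrix. -/
noncomputable def frob {k : ℕ} (A : Matrix (Fin k) (Fin k) ℝ) : ℝ :=
  Real.sqrt (∑ i, ∑ j, (A i j) ^ 2)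

/-- Geodesic distance on the space of positive definite matrices. -/
noncomputable def dg {k : ℕ} (A B : Matrix (Fin k) (Fin k) ℝ) : ℝ :=
  frob (mlog ((msqrt A)⁻¹ * B * (msqrt A)⁻¹))

/-- Sign vectors in `{-1,1}^k`. -/
def SignVec (k : ℕ) := {s : Fin k → ℝ // ∀ i, s i = 1 ∨ s i = -1}

/-!
Put `S = Σ_a^{1/2}` and `C = S⁻¹ Σ_b S⁻¹`. Both paths are congruences by `S` of functions of the
single matrix `C`: `Σ̃_t = S C^t S` and `Σ*_t = S ψ_t(C) S` with `ψ_t(x) = ((1 - t) + t x⁻¹)⁻¹`,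
the weighted harmonic mean of `1` and `x`. The scalar harmonic–geometric mean inequality
`ψ_t(x) ≤ x^t` gives `Σ*_t ≤ Σ̃_t` in the Loewner order, and `λ_k` is Loewner monotone.

For the second inequality we may assume `m = min(λ_k(Σ_a), λ_k(Σ_b)) > 0`; then `m • 1 ≤ Σ_a, Σ_b`.
Inversion is Loewner antitone, hence `(Σ*_t)⁻¹ = (1 - t) Σ_a⁻¹ + t Σ_b⁻¹ ≤ m⁻¹ • 1`, and
inverting once more gives `m • 1 ≤ Σ*_t`.
-/

open scoped MatrixOrder

namespace Matrix

variable {n : Type*}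

lemma PosDef.one_sub_smul_add_smul {A B : Matrix n n ℝ} (hA : A.PosDef) (hB : B.PosDef) {t : ℝ}
    (ht : t ∈ Set.Icc (0 : ℝ) 1) : ((1 - t) • A + t • B).PosDef := by
  rcases ht.2.lt_or_eq with ht1 | rfl
  · exact (hA.smul (sub_pos.mpr ht1)).add_posSemidef (hB.posSemidef.smul ht.1)
  · simpa using hB

variable [Fintype n]

lemma IsHermitian.dotProduct_mulVec_comm {A : Matrix n n ℝ} (hA : A.IsHermitian) (u v : n → ℝ) :
    u ⬝ᵥ A *ᵥ v = v ⬝ᵥ A *ᵥ u := by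
  rw [dotProduct_mulVec, ← mulVec_transpose, ← conjTranspose_eq_transpose_of_trivial, hA.eq,
    dotProduct_comm]

lemma dotProduct_mulVec_le_of_le {A B : Matrix n n ℝ} (h : A ≤ B) (u : n → ℝ) :
    u ⬝ᵥ A *ᵥ u ≤ u ⬝ᵥ B *ᵥ u := by
  have := (le_iff.mp h).dotProduct_mulVec_nonneg u
  rw [star_trivial, sub_mulVec, dotProduct_sub] at this
  linarith

variable [DecidableEq n]

lemma PosDef.conj_of_isHermitian {B T : Matrix n n ℝ} (hB : B.PosDef) (hT : T.IsHermitian)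
    (hTu : IsUnit T) : (T * B * T).PosDef := by
  simpa only [hT.eq] using hB.conjTranspose_mul_mul_same (mulVec_injective_of_isUnit hTu)

lemma PosDef.spectrum_pos {A : Matrix n n ℝ} (hA : A.PosDef) {x : ℝ} (hx : x ∈ spectrum ℝ A) :
    0 < x :=
  (isStrictlyPositive_iff_posDef.mpr hA).spectrum_pos hx

lemma PosDef.two_mul_dotProduct_sub_le_inv {A : Matrix n n ℝ} (hA : A.PosDef) (u v : n → ℝ) :
    2 * (u ⬝ᵥ v) - v ⬝ᵥ A *ᵥ v ≤ u ⬝ᵥ A⁻¹ *ᵥ u := by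
  set w := A⁻¹ *ᵥ u
  have hAw : A *ᵥ w = u := by
    rw [mulVec_mulVec, mul_nonsing_inv _ ((isUnit_iff_isUnit_det A).mp hA.isUnit), one_mulVec]
  have h := hA.posSemidef.dotProduct_mulVec_nonneg (v - w)
  rw [star_trivial, mulVec_sub, hAw, sub_dotProduct, dotProduct_sub, dotProduct_sub,
    hA.isHermitian.dotProduct_mulVec_comm w v, hAw, dotProduct_comm w u, dotProduct_comm v u] at h
  linarith

/-- `u ⬝ᵥ A⁻¹ *ᵥ u` is the supremum over `v` of `2 u ⬝ᵥ v - v ⬝ᵥ A *ᵥ v`, attained at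
`v = A⁻¹ *ᵥ u`, and that expression is antitone in `A`. -/
theorem PosDef.inv_le_inv_of_le {A B : Matrix n n ℝ} (hA : A.PosDef) (hB : B.PosDef)
    (h : A ≤ B) : B⁻¹ ≤ A⁻¹ := by
  refine le_iff.mpr (.of_dotProduct_mulVec_nonneg (hA.inv.isHermitian.sub hB.inv.isHermitian)
    fun u => ?_)
  have hattained : 2 * (u ⬝ᵥ B⁻¹ *ᵥ u) - (B⁻¹ *ᵥ u) ⬝ᵥ B *ᵥ (B⁻¹ *ᵥ u) = u ⬝ᵥ B⁻¹ *ᵥ u := by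
    rw [mulVec_mulVec, mul_nonsing_inv _ ((isUnit_iff_isUnit_det B).mp hB.isUnit), one_mulVec,
      dotProduct_comm (B⁻¹ *ᵥ u) u]
    ring
  rw [star_trivial, sub_mulVec, dotProduct_sub]
  linarith [hA.two_mul_dotProduct_sub_le_inv u (B⁻¹ *ᵥ u), dotProduct_mulVec_le_of_le h (B⁻¹ *ᵥ u)]

lemma inv_smul_one {r : ℝ} (hr : r ≠ 0) : (r • 1 : Matrix n n ℝ)⁻¹ = r⁻¹ • 1 :=
  inv_eq_left_inv (by rw [smul_mul_smul_comm, inv_mul_cancel₀ hr, one_mul, one_smul])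

lemma PosDef.inv_one_sub_smul_one_add_smul_inv {C : Matrix n n ℝ} (hC : C.PosDef) {t : ℝ}
    (ht : t ∈ Set.Icc (0 : ℝ) 1) :
    ((1 - t) • 1 + t • C⁻¹)⁻¹ = cfc (fun x => ((1 - t) + t * x⁻¹)⁻¹) C := by
  have : IsSelfAdjoint C := hC.isHermitian.isSelfAdjoint
  have hcont (f : ℝ → ℝ) : ContinuousOn f (spectrum ℝ C) := C.finite_real_spectrum.continuousOn f
  have hpos {x : ℝ} (hx : x ∈ spectrum ℝ C) : 0 < (1 - t) + t * x⁻¹ := by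
    have hx := hC.spectrum_pos hx
    rcases ht.2.lt_or_eq with ht1 | rfl
    · nlinarith [mul_nonneg ht.1 (inv_pos.mpr hx).le]
    · simpa using hx
  rw [cfc_inv _ C (fun x hx => (hpos hx).ne') (hcont _),
    cfc_const_add (1 - t) (fun x => t * x⁻¹) C (hcont _), cfc_const_mul t (·⁻¹) C (hcont _),
    cfc_ringInverse_id C hC.isUnit, Algebra.algebraMap_eq_smul_one,
    nonsing_inv_eq_ringInverse, nonsing_inv_eq_ringInverse]

end Matrix

lemma inv_one_sub_add_mul_inv_le_rpow {t x : ℝ} (ht : t ∈ Set.Icc (0 : ℝ) 1) (hx : 0 < x) :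
    ((1 - t) + t * x⁻¹)⁻¹ ≤ x ^ t := by
  have hamgm : x ^ (-t) ≤ (1 - t) + t * x⁻¹ :=
    calc x ^ (-t) = 1 ^ (1 - t) * x⁻¹ ^ t := by
          rw [Real.one_rpow, one_mul, Real.inv_rpow hx.le, Real.rpow_neg hx.le]
      _ ≤ (1 - t) * 1 + t * x⁻¹ :=
          Real.geom_mean_le_arith_mean2_weighted (by linarith [ht.2]) ht.1 zero_le_one
            (inv_pos.mpr hx).le (by ring)
      _ = (1 - t) + t * x⁻¹ := by ring
  calc ((1 - t) + t * x⁻¹)⁻¹ ≤ (x ^ (-t))⁻¹ := inv_anti₀ (Real.rpow_pos_of_pos hx _) hamgm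
    _ = x ^ t := by rw [Real.rpow_neg hx.le, inv_inv]

section lamMin

variable {k : ℕ} {N P : Matrix (Fin k) (Fin k) ℝ} {c : ℝ}

instance [NeZero k] : Nonempty {u : Fin k → ℝ // u ⬝ᵥ u = 1} :=
  ⟨⟨Pi.single 0 1, by simp [dotProduct, Pi.single_apply]⟩⟩

lemma bddBelow_range_dotProduct_mulVec (hN : N.PosSemidef) :
    BddBelow (Set.range fun u : {u : Fin k → ℝ // u ⬝ᵥ u = 1} => u.1 ⬝ᵥ N *ᵥ u.1) :=
  ⟨0, by rintro _ ⟨u, rfl⟩; simpa using hN.dotProduct_mulVec_nonneg u.1⟩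

lemma lamMin_nonneg (hN : N.PosSemidef) : 0 ≤ lamMin N :=
  Real.iInf_nonneg fun u => by simpa using hN.dotProduct_mulVec_nonneg u.1

lemma lamMin_le_dotProduct_mulVec (hN : N.PosSemidef) {u : Fin k → ℝ} (hu : u ⬝ᵥ u = 1) :
    lamMin N ≤ u ⬝ᵥ N *ᵥ u :=
  ciInf_le (bddBelow_range_dotProduct_mulVec hN) ⟨u, hu⟩

lemma lamMin_mono (hN : N.PosSemidef) (h : N ≤ P) : lamMin N ≤ lamMin P :=
  ciInf_mono (bddBelow_range_dotProduct_mulVec hN) fun u => dotProduct_mulVec_le_of_le h u.1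

lemma dotProduct_smul_one_mulVec (u : Fin k → ℝ) :
    u ⬝ᵥ (c • 1 : Matrix (Fin k) (Fin k) ℝ) *ᵥ u = c * (u ⬝ᵥ u) := by
  rw [smul_mulVec, one_mulVec, dotProduct_smul, smul_eq_mul]

lemma le_lamMin_of_smul_one_le [NeZero k] (h : c • 1 ≤ N) : c ≤ lamMin N :=
  le_ciInf fun u => by
    simpa [dotProduct_smul_one_mulVec, u.2] using dotProduct_mulVec_le_of_le h u.1

lemma smul_one_le_of_le_lamMin (hN : N.PosSemidef) (h : c ≤ lamMin N) : c • 1 ≤ N := by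
  refine le_iff.mpr (.of_dotProduct_mulVec_nonneg (hN.isHermitian.sub (by simp)) fun x => ?_)
  rw [star_trivial, sub_mulVec, dotProduct_sub, dotProduct_smul_one_mulVec, sub_nonneg]
  rcases eq_or_ne x 0 with rfl | hx
  · simp
  have hxx : 0 < x ⬝ᵥ x := by simpa using dotProduct_star_self_pos_iff.mpr hx
  set r := √(x ⬝ᵥ x)
  have hr : 0 < r := Real.sqrt_pos.mpr hxx
  have hrr : r * r = x ⬝ᵥ x := Real.mul_self_sqrt hxx.le
  have hu : (r⁻¹ • x) ⬝ᵥ (r⁻¹ • x) = 1 := by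
    rw [smul_dotProduct, dotProduct_smul, ← hrr, smul_eq_mul, smul_eq_mul]
    field_simp
  have hcu := h.trans (lamMin_le_dotProduct_mulVec hN hu)
  simp only [mulVec_smul, smul_dotProduct, dotProduct_smul, smul_eq_mul] at hcu
  calc c * (x ⬝ᵥ x) = c * (r * r) := by rw [hrr]
    _ ≤ r⁻¹ * (r⁻¹ * x ⬝ᵥ N *ᵥ x) * (r * r) := by gcongr
    _ = x ⬝ᵥ N *ᵥ x := by field_simp

end lamMin

section paths

variable {k : ℕ} {A B S : Matrix (Fin k) (Fin k) ℝ} {t c : ℝ}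

lemma isSelfAdjoint_msqrt (A : Matrix (Fin k) (Fin k) ℝ) : IsSelfAdjoint (msqrt A) :=
  cfc_predicate _ A

lemma msqrt_mul_self (hA : A.PosSemidef) : msqrt A * msqrt A = A := by
  have : IsSelfAdjoint A := hA.isHermitian.isSelfAdjoint
  rw [msqrt, ← cfc_mul Real.sqrt Real.sqrt A]
  conv_rhs => rw [← cfc_id' ℝ A]
  refine cfc_congr fun x hx => Real.mul_self_sqrt ?_
  exact spectrum_nonneg_of_nonneg (nonneg_iff_posSemidef.mpr hA) hx

lemma isUnit_msqrt (hA : A.PosDef) : IsUnit (msqrt A) :=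
  isUnit_of_mul_isUnit_left ((msqrt_mul_self hA.posSemidef).symm ▸ hA.isUnit)

lemma harmPath_eq_conj (hS : S.IsHermitian) (hSu : IsUnit S) (hSA : S * S = A) (hB : B.PosDef)
    (ht : t ∈ Set.Icc (0 : ℝ) 1) :
    harmPath A B t = S * cfc (fun x => ((1 - t) + t * x⁻¹)⁻¹) (S⁻¹ * B * S⁻¹) * S := by
  have hSdet : IsUnit S.det := (isUnit_iff_isUnit_det S).mp hSu
  set C := S⁻¹ * B * S⁻¹
  have hAinv : A⁻¹ = S⁻¹ * S⁻¹ := by rw [← hSA, Matrix.mul_inv_rev]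
  have hBinv : B⁻¹ = S⁻¹ * C⁻¹ * S⁻¹ := by
    have hBC : B = S * C * S := by
      simp only [C, ← mul_assoc, mul_nonsing_inv _ hSdet, one_mul]
      simp only [mul_assoc, nonsing_inv_mul _ hSdet, mul_one]
    rw [hBC, Matrix.mul_inv_rev, Matrix.mul_inv_rev, mul_assoc]
  have hW : (1 - t) • A⁻¹ + t • B⁻¹ = S⁻¹ * ((1 - t) • 1 + t • C⁻¹) * S⁻¹ := by
    rw [hAinv, hBinv]
    simp only [Matrix.mul_add, Matrix.add_mul, Matrix.mul_smul, Matrix.smul_mul, Matrix.mul_one]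
  have hC : C.PosDef := hB.conj_of_isHermitian hS.inv (isUnit_nonsing_inv_iff.mpr hSu)
  rw [harmPath, hW, Matrix.mul_inv_rev, Matrix.mul_inv_rev, nonsing_inv_nonsing_inv _ hSdet,
    ← mul_assoc, hC.inv_one_sub_smul_one_add_smul_inv ht]

lemma harmPath_le_geoPath (hA : A.PosDef) (hB : B.PosDef) (ht : t ∈ Set.Icc (0 : ℝ) 1) :
    harmPath A B t ≤ geoPath A B t := by
  have hS := isHermitian_iff_isSelfAdjoint.mpr (isSelfAdjoint_msqrt A)
  have hSu := isUnit_msqrt hA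
  have hC := hB.conj_of_isHermitian hS.inv (isUnit_nonsing_inv_iff.mpr hSu)
  rw [harmPath_eq_conj hS hSu (msqrt_mul_self hA.posSemidef) hB ht, geoPath, mpow]
  refine hS.isSelfAdjoint.conjugate_le_conjugate (cfc_mono (fun x hx => ?_) ?_ ?_)
  · exact inv_one_sub_add_mul_inv_le_rpow ht (hC.spectrum_pos hx)
  all_goals exact finite_real_spectrum.continuousOn _

lemma harmPath_posDef (hA : A.PosDef) (hB : B.PosDef) (ht : t ∈ Set.Icc (0 : ℝ) 1) :
    (harmPath A B t).PosDef :=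
  (hA.inv.one_sub_smul_add_smul hB.inv ht).inv

lemma smul_one_le_harmPath (hc : 0 < c) (hA : A.PosDef) (hB : B.PosDef)
    (hcA : c • 1 ≤ A) (hcB : c • 1 ≤ B) (ht : t ∈ Set.Icc (0 : ℝ) 1) :
    c • 1 ≤ harmPath A B t := by
  have hc1 : (c • 1 : Matrix (Fin k) (Fin k) ℝ).PosDef := PosDef.one.smul hc
  have hAinv : A⁻¹ ≤ c⁻¹ • 1 := inv_smul_one (n := Fin k) hc.ne' ▸ hc1.inv_le_inv_of_le hA hcA
  have hBinv : B⁻¹ ≤ c⁻¹ • 1 := inv_smul_one (n := Fin k) hc.ne' ▸ hc1.inv_le_inv_of_le hB hcB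
  have hW : (1 - t) • A⁻¹ + t • B⁻¹ ≤ c⁻¹ • 1 :=
    calc (1 - t) • A⁻¹ + t • B⁻¹ ≤ (1 - t) • (c⁻¹ • 1) + t • (c⁻¹ • 1) := by
          gcongr
          · linarith [ht.2]
          · exact ht.1
      _ = c⁻¹ • 1 := by module
  have := (hA.inv.one_sub_smul_add_smul hB.inv ht).inv_le_inv_of_le
    (PosDef.one.smul (inv_pos.mpr hc)) hW
  rwa [inv_smul_one (inv_ne_zero hc.ne'), inv_inv] at this

end paths

/-- along the geodesic and harmonic paths between positive definite
matrices, `λ_k(Σ̃_t) ≥ λ_k(Σ*_t) ≥ min(λ_k(Σ_a), λ_k(Σ_b))`. -/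
theorem lamMin_geoPath_harmPath {k : ℕ} [NeZero k] (A B : Matrix (Fin k) (Fin k) ℝ)
    (hA : A.PosDef) (hB : B.PosDef) (t : ℝ) (ht : t ∈ Set.Icc (0 : ℝ) 1) :
    lamMin (harmPath A B t) ≤ lamMin (geoPath A B t) ∧
      min (lamMin A) (lamMin B) ≤ lamMin (harmPath A B t) := by
  have hH := (harmPath_posDef hA hB ht).posSemidef
  refine ⟨lamMin_mono hH (harmPath_le_geoPath hA hB ht), ?_⟩
  rcases le_or_gt (min (lamMin A) (lamMin B)) 0 with hm | hm
  · exact hm.trans (lamMin_nonneg hH)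
  · exact le_lamMin_of_smul_one_le <| smul_one_le_harmPath hm hA hB
      (smul_one_le_of_le_lamMin hA.posSemidef (min_le_left _ _))
      (smul_one_le_of_le_lamMin hB.posSemidef (min_le_right _ _)) ht
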